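/- Let BG = (V, E) be a bi-directed graph and let BG^t be its ListRankingTransform. If there is a (nonempty) directed path in BG^t from u^a to v^b for some orientations a, b ∈ {▷, ◁}, then there is a valid bi-directed walk in BG from u to v. -/

import Mathlib

/-- Orientations of the arrowheads of a bi-directed edge: `fwd` = ▷, `rev` = ◁. -/
inductive Orient : Type
  | fwd | rev
  deriving DecidableEq

/-- `¬` on orientations: swaps ▷ and ◁. -/
def Orient.neg : Orient → Orient
  | .fwd => .rev
  | .rev => .fwd

/-- A valid bi-directed walk of length `m ≥ 1` from `u` to `v` in the bi-directed graph
with edge set `E`: a vertex sequence `vert 0 = u, …, vert m = v` together with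
orientation pairs `(a l, b l)` for `1 ≤ l ≤ m` such that each step traverses a
bi-directed edge (in either direction) and the orientations of consecutive edges agree
at each intermediate vertex. -/
def IsBiWalk {V : Type*} (E : Set (V × V × Orient × Orient)) (m : ℕ)
    (vert : ℕ → V) (a b : ℕ → Orient) (u v : V) : Prop :=
  1 ≤ m ∧ vert 0 = u ∧ vert m = v ∧
  (∀ l, 1 ≤ l → l ≤ m →
    (vert (l - 1), vert l, a l, b l) ∈ E ∨
    (vert l, vert (l - 1), (b l).neg, (a l).neg) ∈ E) ∧
  (∀ l, 1 ≤ l → l < m → b l = a (l + 1))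

/-- There is a valid bi-directed walk from `u` to `v`. -/
def BiWalk {V : Type*} (E : Set (V × V × Orient × Orient)) (u v : V) : Prop :=
  ∃ m vert a b, IsBiWalk E m vert a b u v

/-- The arcs of the directed graph `BGᵗ` produced by the ListRankingTransform on vertex
set `V × Orient` (writing `v^o` for `(v, o)`): each bi-directed edge `(u, v, o₁, o₂) ∈ E`
yields the two directed arcs `u^{o₁} → v^{o₂}` and `v^{¬o₂} → u^{¬o₁}`. -/
def TArc {V : Type*} (E : Set (V × V × Orient × Orient)) (p q : V × Orient) : Prop :=
  ∃ u v o₁ o₂, (u, v, o₁, o₂) ∈ E ∧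
    ((p = (u, o₁) ∧ q = (v, o₂)) ∨ (p = (v, o₂.neg) ∧ q = (u, o₁.neg)))

@[simp]
theorem Orient.neg_neg (o : Orient) : o.neg.neg = o := by cases o <;> rfl

def IsBiStep {V : Type*} (E : Set (V × V × Orient × Orient)) (x y : V) (o₁ o₂ : Orient) : Prop :=
  (x, y, o₁, o₂) ∈ E ∨ (y, x, o₂.neg, o₁.neg) ∈ E

theorem TArc.isBiStep {V : Type*} {E : Set (V × V × Orient × Orient)} {p q : V × Orient}
    (h : TArc E p q) : IsBiStep E p.1 q.1 p.2 q.2 := by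
  obtain ⟨x, y, o₁, o₂, hE, ⟨rfl, rfl⟩ | ⟨rfl, rfl⟩⟩ := h
  · exact .inl hE
  · exact .inr (by simpa only [Orient.neg_neg] using hE)

namespace IsBiWalk

variable {V : Type*} {E : Set (V × V × Orient × Orient)}

theorem single {x y : V} {o₁ o₂ : Orient} (h : IsBiStep E x y o₁ o₂) :
    IsBiWalk E 1 (fun l => if l = 0 then x else y) (fun _ => o₁) (fun _ => o₂) x y := by
  refine ⟨le_rfl, rfl, rfl, fun l hl hl' => ?_, fun _ hl hl' => absurd hl' (by omega)⟩
  obtain rfl : l = 1 := by omega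
  exact h

theorem snoc {m : ℕ} {vert : ℕ → V} {a b : ℕ → Orient} {u w x : V} {o₁ o₂ : Orient}
    (hw : IsBiWalk E m vert a b u w) (hb : b m = o₁) (h : IsBiStep E w x o₁ o₂) :
    IsBiWalk E (m + 1) (Function.update vert (m + 1) x) (Function.update a (m + 1) o₁)
      (Function.update b (m + 1) o₂) u x := by
  obtain ⟨hm, h0, hmw, hstep, hcons⟩ := hw
  refine ⟨by omega, by simp [h0], by simp, fun l hl hl' => ?_, fun l hl hl' => ?_⟩
  · rcases hl'.eq_or_lt with rfl | hlt
    · simpa [hmw, IsBiStep] using h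
    · simpa [hlt.ne, show l - 1 ≠ m + 1 by omega] using hstep l hl (by omega)
  · rcases (Nat.lt_succ_iff.mp hl').eq_or_lt with rfl | hlt
    · simpa using hb
    · rw [Function.update_of_ne (by omega), Function.update_of_ne (by omega)]
      exact hcons l hl hlt

end IsBiWalk

/-- The orientation `b m` at the end of the walk is remembered so that the walk can be
extended along the next arc. -/
theorem exists_isBiWalk_of_transGen_tArc {V : Type*} {E : Set (V × V × Orient × Orient)}
    {p q : V × Orient} (h : Relation.TransGen (TArc E) p q) :
    ∃ m vert a b, IsBiWalk E m vert a b p.1 q.1 ∧ b m = q.2 := by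
  induction h with
  | single harc => exact ⟨1, _, _, _, .single harc.isBiStep, rfl⟩
  | tail _ harc ih =>
    obtain ⟨m, vert, a, b, hw, hb⟩ := ih
    exact ⟨m + 1, _, _, _, hw.snoc hb harc.isBiStep, by simp⟩

/-- A (nonempty) directed path in the ListRankingTransform from `u^a` to
`v^b` yields a valid bi-directed walk from `u` to `v` in the bi-directed graph. -/
theorem biWalk_of_transGen_tArc {V : Type*} (E : Set (V × V × Orient × Orient))
    (u v : V) (a b : Orient) (h : Relation.TransGen (TArc E) (u, a) (v, b)) :
    BiWalk E u v :=
  let ⟨m, vert, a, b, hw, _⟩ := exists_isBiWalk_of_transGen_tArc h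
  ⟨m, vert, a, b, hw⟩
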